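/- Let 𝓑(m,w) = Σ_{i,j} b̂(m_{i,j}, w_{i,j}) and 𝓕(m) = Σ_{i,j} F(x_{i,j}, m_{i,j}) with F continuous in m on [0,∞) and equal to +∞ for m < 0. Then the minimization of 𝓑 + 𝓕 over the affine constraint set {(m,w) : G(m,w) = (0,1)} intersected with {m ≤ d} admits at least one minimizer, and the optimal value is finite. -/

import Mathlib

open scoped BigOperators
open Classical

noncomputable section

/-- Euclidean norm on ℝ⁴. -/
def nrm4 (w : Fin 4 → ℝ) : ℝ := Real.sqrt (∑ i, (w i) ^ 2)

/-- The cone `K = ℝ₊ × ℝ₋ × ℝ₊ × ℝ₋`. -/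
def Kset : Set (Fin 4 → ℝ) := {w | 0 ≤ w 0 ∧ w 1 ≤ 0 ∧ 0 ≤ w 2 ∧ w 3 ≤ 0}

/-- The cost function `b`. -/
def bfun (q : ℝ) (m : ℝ) (w : Fin 4 → ℝ) : EReal :=
  if 0 < m then (((nrm4 w ^ q) / (q * m ^ (q - 1)) : ℝ) : EReal)
  else if m = 0 ∧ w = 0 then (0 : EReal) else ⊤

/-- `b̂ = b + ι_{ℝ × K}`. -/
def bhat (q : ℝ) (m : ℝ) (w : Fin 4 → ℝ) : EReal :=
  bfun q m w + (if w ∈ Kset then (0 : EReal) else ⊤)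

/-!
Direct method. The cost is lower semicontinuous: `b̂` is the perspective-type function
`|w|^q / (q m^(q-1))`, which tends to `+∞` as `m → 0⁺` with `w ≠ 0`, plus the indicator of the
closed cone `K`, and `F` is continuous where finite and `+∞` elsewhere. The feasible set contains
a point of finite cost: `m = d / (h Σ d)` with a flux solving `B w = -A m`, shifted into `K` by a
constant field, which `B` kills. On the sublevel set of that point `0 ≤ m ≤ d`, so the `F` terms
are bounded below, each `b̂` is bounded above, and `|w|^q ≤ q b̂ d^(q-1)` bounds `w`: the sublevel
set is compact and the minimum is attained.
-/

open Set Filter Topology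

section GeneralFacts

variable {α ι : Type*} [TopologicalSpace α]

theorem ContinuousOn.lowerSemicontinuous_of_eq_top {γ : Type*} [LinearOrder γ] [OrderTop γ]
    [TopologicalSpace γ] [ClosedIicTopology γ] {f : α → γ} {s : Set α}
    (hf : ContinuousOn f s) (hs : IsClosed s) (htop : ∀ x ∉ s, f x = ⊤) :
    LowerSemicontinuous f := by
  rw [lowerSemicontinuous_iff_isClosed_preimage]
  intro y
  rcases eq_or_ne y ⊤ with rfl | hy
  · simp
  · convert hf.preimage_isClosed_of_isClosed hs (isClosed_Iic (a := y)) using 1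
    ext x
    by_cases hx : x ∈ s <;> simp [hx, htop, hy]

theorem exists_isMinOn_of_isCompact_sublevel {β : Type*} [LinearOrder β] {f : α → β}
    {s : Set α} {x₀ : α} (hx₀ : x₀ ∈ s) (hf : LowerSemicontinuousOn f s)
    (hK : IsCompact (s ∩ {x | f x ≤ f x₀})) : ∃ x ∈ s, IsMinOn f s x := by
  obtain ⟨x, ⟨hxs, hxx₀⟩, hmin⟩ := LowerSemicontinuousOn.exists_isMinOn
    (s := s ∩ {x | f x ≤ f x₀}) ⟨x₀, hx₀, le_rfl⟩ hK (hf.mono inter_subset_left)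
  refine ⟨x, hxs, fun y hy => ?_⟩
  rcases le_total (f y) (f x₀) with hy₀ | hy₀
  · exact hmin ⟨hy, hy₀⟩
  · exact hxx₀.trans hy₀

theorem LowerSemicontinuous.ereal_add {f g : α → EReal} (hf : LowerSemicontinuous f)
    (hg : LowerSemicontinuous g) : LowerSemicontinuous fun x => f x + g x := by
  -- Where a summand is `⊥` so is the sum; elsewhere addition on `EReal` is continuous.
  intro x
  by_cases hfx : f x = ⊥
  · intro y hy
    simp [hfx] at hy
  by_cases hgx : g x = ⊥
  · intro y hy
    simp [hgx] at hy
  exact LowerSemicontinuousAt.add' (hf x) (hg x) (EReal.continuousAt_add (.inr hgx) (.inl hfx))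

theorem lowerSemicontinuous_ereal_sum {f : ι → α → EReal} {s : Finset ι}
    (hf : ∀ i ∈ s, LowerSemicontinuous (f i)) :
    LowerSemicontinuous fun x => ∑ i ∈ s, f i x := by
  induction s using Finset.induction_on with
  | empty => simpa using lowerSemicontinuous_const
  | insert i s hi ih =>
    simp only [Finset.sum_insert hi]
    exact (hf i (Finset.mem_insert_self i s)).ereal_add
      (ih fun j hj => hf j (Finset.mem_insert_of_mem hj))

theorem EReal.coe_finset_sum (s : Finset ι) (f : ι → ℝ) :
    ((∑ i ∈ s, f i : ℝ) : EReal) = ∑ i ∈ s, (f i : EReal) :=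
  map_sum (⟨⟨(↑), EReal.coe_zero⟩, EReal.coe_add⟩ : ℝ →+ EReal) f s

theorem EReal.le_coe_sub_sum_of_sum_add_le {s : Finset ι} {b g : ι → EReal} {L : ι → ℝ}
    {C : ℝ} (hb : ∀ i ∈ s, 0 ≤ b i) (hL : ∀ i ∈ s, (L i : EReal) ≤ g i)
    (hC : ∑ i ∈ s, (b i + g i) ≤ C) {j : ι} (hj : j ∈ s) :
    b j ≤ ((C - ∑ i ∈ s, L i : ℝ) : EReal) := by
  rw [EReal.coe_sub,
    EReal.le_sub_iff_add_le (.inl (EReal.coe_ne_bot _)) (.inl (EReal.coe_ne_top _))]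
  calc b j + ((∑ i ∈ s, L i : ℝ) : EReal) = b j + ∑ i ∈ s, (L i : EReal) := by
        rw [EReal.coe_finset_sum]
    _ ≤ ∑ i ∈ s, b i + ∑ i ∈ s, g i :=
        add_le_add (Finset.single_le_sum hb hj) (Finset.sum_le_sum hL)
    _ = ∑ i ∈ s, (b i + g i) := Finset.sum_add_distrib.symm
    _ ≤ C := hC

theorem exists_coe_le_of_continuousOn_Ici {f : ℝ → EReal} (hf : ContinuousOn f (Ici 0))
    (htop : ∀ m < 0, f m = ⊤) (hfin : ∀ m, 0 ≤ m → ∃ r : ℝ, f m = r) (D : ℝ) :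
    ∃ L : ℝ, ∀ m ≤ D, (L : EReal) ≤ f m := by
  obtain ⟨x, hx, hmin⟩ := isCompact_Icc.exists_isMinOn ⟨0, le_rfl, abs_nonneg D⟩
    (hf.mono fun m hm => hm.1)
  obtain ⟨L, hL⟩ := hfin x hx.1
  refine ⟨L, fun m hmD => ?_⟩
  rcases lt_or_ge m 0 with hm | hm
  · simp [htop m hm]
  · exact hL ▸ hmin ⟨hm, hmD.trans (le_abs_self D)⟩

end GeneralFacts

section LocalCost

variable {q m : ℝ} {w : Fin 4 → ℝ}

theorem nrm4_eq_norm (w : Fin 4 → ℝ) : nrm4 w = ‖WithLp.toLp 2 w‖ := by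
  rw [EuclideanSpace.norm_eq]
  simp [nrm4]

theorem nrm4_nonneg (w : Fin 4 → ℝ) : 0 ≤ nrm4 w := Real.sqrt_nonneg _

theorem nrm4_pos (hw : w ≠ 0) : 0 < nrm4 w := by
  rw [nrm4_eq_norm]
  exact norm_pos_iff.2 ((WithLp.toLp_eq_zero 2).not.2 hw)

theorem continuous_nrm4 : Continuous nrm4 := by
  unfold nrm4
  fun_prop

theorem abs_le_nrm4 (w : Fin 4 → ℝ) (k : Fin 4) : |w k| ≤ nrm4 w := by
  simpa [nrm4_eq_norm] using PiLp.norm_apply_le (WithLp.toLp 2 w) k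

theorem isClosed_Kset : IsClosed Kset :=
  (isClosed_le continuous_const (continuous_apply 0)).inter <|
    (isClosed_le (continuous_apply 1) continuous_const).inter <|
      (isClosed_le continuous_const (continuous_apply 2)).inter
        (isClosed_le (continuous_apply 3) continuous_const)

theorem exists_forall_add_mem_Kset {ι : Type*} [Fintype ι] (w : ι → Fin 4 → ℝ) :
    ∃ c : Fin 4 → ℝ, ∀ i, w i + c ∈ Kset := by
  refine ⟨![‖w‖, -‖w‖, ‖w‖, -‖w‖], fun i => ?_⟩
  have hw : ∀ k, |w i k| ≤ ‖w‖ := fun k => (norm_le_pi_norm (w i) k).trans (norm_le_pi_norm w i)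
  have h0 := abs_le.1 (hw 0)
  have h1 := abs_le.1 (hw 1)
  have h2 := abs_le.1 (hw 2)
  have h3 := abs_le.1 (hw 3)
  refine ⟨?_, ?_, ?_, ?_⟩ <;> simp only [Pi.add_apply, Matrix.cons_val] <;> linarith

theorem bfun_of_pos (hm : 0 < m) (w : Fin 4 → ℝ) :
    bfun q m w = ((nrm4 w ^ q / (q * m ^ (q - 1)) : ℝ) : EReal) :=
  if_pos hm

theorem bfun_of_neg (hm : m < 0) (w : Fin 4 → ℝ) : bfun q m w = ⊤ := by
  rw [bfun, if_neg hm.not_gt, if_neg fun h => hm.ne h.1]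

theorem bfun_of_nonpos (hm : m ≤ 0) (hw : w ≠ 0) : bfun q m w = ⊤ := by
  rw [bfun, if_neg hm.not_gt, if_neg fun h => hw h.2]

theorem bfun_zero_zero : bfun q 0 0 = 0 := by
  simp [bfun]

theorem bfun_nonneg (hq : 0 ≤ q) (m : ℝ) (w : Fin 4 → ℝ) : 0 ≤ bfun q m w := by
  unfold bfun
  split_ifs with hm
  · exact EReal.coe_nonneg.2 <|
      div_nonneg (Real.rpow_nonneg (nrm4_nonneg w) q) (mul_nonneg hq (Real.rpow_nonneg hm.le _))
  · exact le_rfl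
  · exact le_top

theorem nonneg_of_bfun_ne_top (h : bfun q m w ≠ ⊤) : 0 ≤ m :=
  not_lt.1 fun hm => h (bfun_of_neg hm w)

theorem nrm4_le_of_bfun_le (hq : 1 ≤ q) {D c : ℝ} (hmD : m ≤ D) (hb : bfun q m w ≤ c) :
    nrm4 w ≤ (q * c * D ^ (q - 1)) ^ q⁻¹ := by
  have hq₀ : 0 < q := by linarith
  have hq₁ : 0 ≤ q - 1 := by linarith
  have hc : 0 ≤ c := EReal.coe_nonneg.1 ((bfun_nonneg hq₀.le m w).trans hb)
  have hm : 0 ≤ m := nonneg_of_bfun_ne_top (ne_top_of_le_ne_top (EReal.coe_ne_top c) hb)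
  have hD : 0 ≤ D := hm.trans hmD
  have hbound : 0 ≤ q * c * D ^ (q - 1) :=
    mul_nonneg (mul_nonneg hq₀.le hc) (Real.rpow_nonneg hD _)
  rw [Real.le_rpow_inv_iff_of_pos (nrm4_nonneg w) hbound hq₀]
  rcases hm.eq_or_lt with rfl | hm
  · obtain rfl : w = 0 := by
      by_contra hw
      rw [bfun_of_nonpos le_rfl hw] at hb
      exact EReal.coe_ne_top c (top_le_iff.1 hb)
    rwa [show nrm4 0 = 0 by simp [nrm4], Real.zero_rpow hq₀.ne']
  · rw [bfun_of_pos hm, EReal.coe_le_coe_iff, div_le_iff₀ (by positivity)] at hb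
    calc nrm4 w ^ q ≤ c * (q * m ^ (q - 1)) := hb
      _ = q * c * m ^ (q - 1) := by ring
      _ ≤ q * c * D ^ (q - 1) := by gcongr

theorem tendsto_bfun_nhds_top (hq : 1 < q) (hw : w ≠ 0) :
    Tendsto (fun p : ℝ × (Fin 4 → ℝ) => bfun q p.1 p.2) (𝓝 (0, w)) (𝓝 ⊤) := by
  rw [← nhdsWithin_univ, ← union_compl_self {p : ℝ × (Fin 4 → ℝ) | 0 < p.1}, nhdsWithin_union]
  refine Tendsto.sup ?_ ?_
  · have hden : Tendsto (fun p : ℝ × (Fin 4 → ℝ) => q * p.1 ^ (q - 1))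
        (𝓝[{p | 0 < p.1}] (0, w)) (𝓝[>] 0) := by
      refine tendsto_nhdsWithin_iff.2 ⟨?_, eventually_nhdsWithin_of_forall fun p hp => ?_⟩
      · have hcont : ContinuousAt (fun p : ℝ × (Fin 4 → ℝ) => q * p.1 ^ (q - 1)) (0, w) :=
          continuousAt_const.mul (continuousAt_fst.rpow_const (.inr (by linarith)))
        simpa only [Real.zero_rpow (show q - 1 ≠ 0 by linarith), mul_zero] using
          hcont.tendsto.mono_left nhdsWithin_le_nhds
      · have : 0 < p.1 ^ (q - 1) := Real.rpow_pos_of_pos hp _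
        show 0 < q * p.1 ^ (q - 1)
        positivity
    have hnum : Tendsto (fun p : ℝ × (Fin 4 → ℝ) => nrm4 p.2 ^ q)
        (𝓝[{p | 0 < p.1}] (0, w)) (𝓝 (nrm4 w ^ q)) :=
      ((continuous_nrm4.comp continuous_snd).rpow_const fun _ => .inr (by linarith)).tendsto
        (0, w) |>.mono_left nhdsWithin_le_nhds
    have hreal := hnum.pos_mul_atTop (Real.rpow_pos_of_pos (nrm4_pos hw) q)
      (tendsto_inv_nhdsGT_zero.comp hden)
    refine (EReal.tendsto_coe_nhds_top_iff.2 hreal).congr' ?_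
    filter_upwards [self_mem_nhdsWithin] with p hp
    rw [bfun_of_pos hp, div_eq_mul_inv]
    rfl
  · refine tendsto_const_nhds.congr' ?_
    have hne : ∀ᶠ p : ℝ × (Fin 4 → ℝ) in 𝓝[{p | 0 < p.1}ᶜ] (0, w), p.2 ≠ 0 :=
      nhdsWithin_le_nhds (continuous_snd.continuousAt.eventually_ne hw)
    filter_upwards [self_mem_nhdsWithin, hne] with p hp hp₂
    exact (bfun_of_nonpos (not_lt.1 hp) hp₂).symm

theorem continuousAt_bfun (hq : 1 < q) {x : ℝ × (Fin 4 → ℝ)} (hx : x ≠ (0, 0)) :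
    ContinuousAt (fun p : ℝ × (Fin 4 → ℝ) => bfun q p.1 p.2) x := by
  obtain ⟨m, w⟩ := x
  rcases lt_trichotomy m 0 with hm | rfl | hm
  · refine ContinuousAt.congr (f := fun _ => ⊤) continuousAt_const ?_
    filter_upwards [continuousAt_fst.eventually_lt continuousAt_const hm] with p hp
    exact (bfun_of_neg hp p.2).symm
  · have hw : w ≠ 0 := fun hw => hx (by rw [hw])
    rw [ContinuousAt, bfun_of_nonpos le_rfl hw]
    exact tendsto_bfun_nhds_top hq hw
  · have hq₀ : 0 < q := by linarith
    have hreal : ContinuousAt (fun p : ℝ × (Fin 4 → ℝ) => nrm4 p.2 ^ q / (q * p.1 ^ (q - 1)))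
        (m, w) :=
      ((continuous_nrm4.comp continuous_snd).continuousAt.rpow_const (.inr hq₀.le)).div
        (continuousAt_const.mul (continuousAt_fst.rpow_const (.inl hm.ne')))
        (by have := Real.rpow_pos_of_pos hm (q - 1); positivity)
    refine (continuous_coe_real_ereal.continuousAt.comp hreal).congr ?_
    filter_upwards [continuousAt_const.eventually_lt continuousAt_fst hm] with p hp
    exact (bfun_of_pos hp p.2).symm

theorem lowerSemicontinuous_bfun (hq : 1 < q) :
    LowerSemicontinuous fun p : ℝ × (Fin 4 → ℝ) => bfun q p.1 p.2 := by
  intro x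
  by_cases hx : x = (0, 0)
  · subst hx
    intro y hy
    replace hy : y < 0 := by simpa [bfun_zero_zero] using hy
    exact Eventually.of_forall fun p => hy.trans_le (bfun_nonneg (by linarith) p.1 p.2)
  · exact (continuousAt_bfun hq hx).lowerSemicontinuousAt

theorem bhat_eq_bfun_add_indicator (m : ℝ) (w : Fin 4 → ℝ) :
    bhat q m w = bfun q m w + Ksetᶜ.indicator (fun _ => ⊤) w := by
  by_cases hw : w ∈ Kset <;> simp [bhat, hw]

theorem bfun_le_bhat (m : ℝ) (w : Fin 4 → ℝ) : bfun q m w ≤ bhat q m w := by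
  rw [bhat_eq_bfun_add_indicator]
  exact le_add_of_nonneg_right (indicator_nonneg (fun _ _ => le_top) w)

theorem bhat_nonneg (hq : 0 ≤ q) (m : ℝ) (w : Fin 4 → ℝ) : 0 ≤ bhat q m w :=
  (bfun_nonneg hq m w).trans (bfun_le_bhat m w)

theorem bhat_of_pos_of_mem (hm : 0 < m) (hw : w ∈ Kset) :
    bhat q m w = ((nrm4 w ^ q / (q * m ^ (q - 1)) : ℝ) : EReal) := by
  rw [bhat, if_pos hw, add_zero, bfun_of_pos hm]

theorem lowerSemicontinuous_bhat (hq : 1 < q) :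
    LowerSemicontinuous fun p : ℝ × (Fin 4 → ℝ) => bhat q p.1 p.2 := by
  simp_rw [bhat_eq_bfun_add_indicator]
  exact (lowerSemicontinuous_bfun hq).ereal_add
    ((isClosed_Kset.isOpen_compl.lowerSemicontinuous_indicator le_top).comp continuous_snd)

end LocalCost

section DiscreteProblem

variable {ι : Type*} [Fintype ι] {q h : ℝ} {F : ι → ℝ → EReal}

def cost (q : ℝ) (F : ι → ℝ → EReal) (p : (ι → ℝ) × (ι → Fin 4 → ℝ)) : EReal :=
  ∑ i, (bhat q (p.1 i) (p.2 i) + F i (p.1 i))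

/-- The constraint `G(m, w) = (0, 1)` of the discrete problem, `h` being the cell area, together
with the density cap `m ≤ d`. -/
def feasibleSet (A : (ι → ℝ) →ₗ[ℝ] (ι → ℝ)) (B : (ι → Fin 4 → ℝ) →ₗ[ℝ] (ι → ℝ)) (h : ℝ)
    (d : ι → ℝ) : Set ((ι → ℝ) × (ι → Fin 4 → ℝ)) :=
  {p | A p.1 + B p.2 = 0 ∧ h * ∑ i, p.1 i = 1 ∧ ∀ i, p.1 i ≤ d i}

theorem isClosed_feasibleSet (A : (ι → ℝ) →ₗ[ℝ] (ι → ℝ)) (B : (ι → Fin 4 → ℝ) →ₗ[ℝ] (ι → ℝ))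
    (h : ℝ) (d : ι → ℝ) : IsClosed (feasibleSet A B h d) := by
  have hA := A.continuous_of_finiteDimensional
  have hB := B.continuous_of_finiteDimensional
  simp only [feasibleSet, ofPred_and, ofPred_forall]
  exact (isClosed_eq (by fun_prop) continuous_const).inter <|
    (isClosed_eq (by fun_prop) continuous_const).inter <|
      isClosed_iInter fun i => isClosed_le (by fun_prop) continuous_const

theorem exists_mem_feasibleSet {A : (ι → ℝ) →ₗ[ℝ] (ι → ℝ)} {B : (ι → Fin 4 → ℝ) →ₗ[ℝ] (ι → ℝ)}
    {d : ι → ℝ} (hAsum : ∀ m, ∑ i, A m i = 0)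
    (hB : {y : ι → ℝ | ∑ i, y i = 0} ⊆ LinearMap.range B)
    (hBconst : ∀ c : Fin 4 → ℝ, B (fun _ => c) = 0) (hd : ∀ i, 0 < d i)
    (hdsum : 1 ≤ h * ∑ i, d i) :
    ∃ p ∈ feasibleSet A B h d, (∀ i, 0 < p.1 i) ∧ ∀ i, p.2 i ∈ Kset := by
  set σ := h * ∑ i, d i
  have hσ : 0 < σ := one_pos.trans_le hdsum
  set m₀ : ι → ℝ := fun i => σ⁻¹ * d i
  obtain ⟨w₁, hw₁⟩ : -A m₀ ∈ LinearMap.range B := hB (by simp [hAsum])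
  obtain ⟨c, hc⟩ := exists_forall_add_mem_Kset w₁
  refine ⟨(m₀, w₁ + fun _ => c), ⟨?_, ?_, fun i => ?_⟩, fun i => mul_pos (inv_pos.2 hσ) (hd i), hc⟩
  · simp [map_add, hBconst, hw₁]
  · change h * ∑ i, σ⁻¹ * d i = 1
    rw [← Finset.mul_sum, mul_left_comm]
    exact inv_mul_cancel₀ hσ.ne'
  · exact mul_le_of_le_one_left (hd i).le (inv_le_one_of_one_le₀ hdsum)

theorem cost_ne_top (hFfin : ∀ i (m : ℝ), 0 ≤ m → ∃ r : ℝ, F i m = r)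
    {p : (ι → ℝ) × (ι → Fin 4 → ℝ)} (hm : ∀ i, 0 < p.1 i) (hw : ∀ i, p.2 i ∈ Kset) :
    cost q F p ≠ ⊤ := by
  refine Finset.sum_induction _ (· ≠ ⊤) (fun a b ha hb => (EReal.add_lt_top ha hb).ne)
    EReal.zero_ne_top fun i _ => ?_
  obtain ⟨r, hr⟩ := hFfin i _ (hm i).le
  rw [bhat_of_pos_of_mem (hm i) (hw i), hr]
  exact EReal.coe_add _ _ ▸ EReal.coe_ne_top _

theorem cost_ne_bot (hq : 0 ≤ q) (hFtop : ∀ i (m : ℝ), m < 0 → F i m = ⊤)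
    (hFfin : ∀ i (m : ℝ), 0 ≤ m → ∃ r : ℝ, F i m = r) (p : (ι → ℝ) × (ι → Fin 4 → ℝ)) :
    cost q F p ≠ ⊥ := by
  refine (WithBot.sum_lt_bot fun i _ => ?_).ne'
  refine EReal.add_ne_bot_iff.2 ⟨(bhat_nonneg hq _ _).trans_lt' EReal.bot_lt_zero |>.ne', ?_⟩
  rcases lt_or_ge (p.1 i) 0 with hm | hm
  · simp [hFtop i _ hm]
  · obtain ⟨r, hr⟩ := hFfin i _ hm
    simp [hr]

theorem lowerSemicontinuous_cost (hq : 1 < q) (hFcont : ∀ i, ContinuousOn (F i) (Ici 0))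
    (hFtop : ∀ i (m : ℝ), m < 0 → F i m = ⊤) : LowerSemicontinuous (cost q F) := by
  have hF : ∀ i, LowerSemicontinuous (F i) := fun i =>
    (hFcont i).lowerSemicontinuous_of_eq_top isClosed_Ici fun m hm => hFtop i m (not_le.1 hm)
  refine lowerSemicontinuous_ereal_sum fun i _ => ?_
  have hpair : Continuous fun p : (ι → ℝ) × (ι → Fin 4 → ℝ) => (p.1 i, p.2 i) := by fun_prop
  have hfst : Continuous fun p : (ι → ℝ) × (ι → Fin 4 → ℝ) => p.1 i := by fun_prop
  exact ((lowerSemicontinuous_bhat hq).comp hpair).ereal_add ((hF i).comp hfst)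

theorem isCompact_feasibleSet_inter_sublevel (hq : 1 < q)
    (hFcont : ∀ i, ContinuousOn (F i) (Ici 0)) (hFtop : ∀ i (m : ℝ), m < 0 → F i m = ⊤)
    (hFfin : ∀ i (m : ℝ), 0 ≤ m → ∃ r : ℝ, F i m = r) (A : (ι → ℝ) →ₗ[ℝ] (ι → ℝ))
    (B : (ι → Fin 4 → ℝ) →ₗ[ℝ] (ι → ℝ)) (h : ℝ) (d : ι → ℝ) {C : EReal} (hC : C ≠ ⊤) :
    IsCompact (feasibleSet A B h d ∩ {p | cost q F p ≤ C}) := by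
  choose L hL using fun i => exists_coe_le_of_continuousOn_Ici (hFcont i) (hFtop i) (hFfin i) (d i)
  set c := C.toReal - ∑ i, L i
  set R : ι → ℝ := fun i => (q * c * d i ^ (q - 1)) ^ q⁻¹
  have hbox : IsCompact ((univ.pi fun i => Icc 0 (d i)) ×ˢ
      (univ.pi fun i => univ.pi fun _ : Fin 4 => Icc (-R i) (R i))) :=
    (isCompact_univ_pi fun i => isCompact_Icc).prod
      (isCompact_univ_pi fun i => isCompact_univ_pi fun _ => isCompact_Icc)
  refine hbox.of_isClosed_subset ((isClosed_feasibleSet A B h d).inter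
    ((lowerSemicontinuous_cost hq hFcont hFtop).isClosed_preimage C)) ?_
  rintro p ⟨⟨-, -, hpd⟩, hpC⟩
  have hb : ∀ i, bfun q (p.1 i) (p.2 i) ≤ c := fun i =>
    (bfun_le_bhat _ _).trans <| EReal.le_coe_sub_sum_of_sum_add_le
      (fun i _ => bhat_nonneg (by linarith) _ _) (fun i _ => hL i _ (hpd i))
      (hpC.trans (EReal.le_coe_toReal hC)) (Finset.mem_univ i)
  exact ⟨fun i _ => ⟨nonneg_of_bfun_ne_top ((hb i).trans_lt (EReal.coe_lt_top c)).ne, hpd i⟩,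
    fun i _ k _ => abs_le.1 ((abs_le_nrm4 _ k).trans (nrm4_le_of_bfun_le hq.le (hpd i) (hb i)))⟩

end DiscreteProblem

theorem stmt7_general (N : ℕ) (q : ℝ) (hq : 1 < q)
    (A : ((Fin N × Fin N) → ℝ) →ₗ[ℝ] ((Fin N × Fin N) → ℝ))
    (B : ((Fin N × Fin N) → (Fin 4 → ℝ)) →ₗ[ℝ] ((Fin N × Fin N) → ℝ))
    (hAsum : ∀ m, ∑ ij, A m ij = 0)
    (hB : (LinearMap.range B : Set ((Fin N × Fin N) → ℝ)) = {y | ∑ ij, y ij = 0})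
    (hBconst : ∀ c : Fin 4 → ℝ, B (fun _ => c) = 0)
    (d : (Fin N × Fin N) → ℝ) (hd : ∀ ij, 0 < d ij)
    (hdsum : 1 < (1 / (N : ℝ)) ^ 2 * ∑ ij, d ij)
    (F : (Fin N × Fin N) → ℝ → EReal)
    (hFcont : ∀ ij, ContinuousOn (F ij) (Set.Ici 0))
    (hFtop : ∀ ij (m : ℝ), m < 0 → F ij m = ⊤)
    (hFfin : ∀ ij (m : ℝ), 0 ≤ m → ∃ r : ℝ, F ij m = (r : EReal)) :
    ∃ p : ((Fin N × Fin N) → ℝ) × ((Fin N × Fin N) → (Fin 4 → ℝ)),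
      (A p.1 + B p.2 = 0 ∧ (1 / (N : ℝ)) ^ 2 * ∑ ij, p.1 ij = 1 ∧ ∀ ij, p.1 ij ≤ d ij) ∧
      (∀ p' : ((Fin N × Fin N) → ℝ) × ((Fin N × Fin N) → (Fin 4 → ℝ)),
        (A p'.1 + B p'.2 = 0 ∧ (1 / (N : ℝ)) ^ 2 * ∑ ij, p'.1 ij = 1 ∧ ∀ ij, p'.1 ij ≤ d ij) →
        (∑ ij, (bhat q (p.1 ij) (p.2 ij) + F ij (p.1 ij)))
          ≤ ∑ ij, (bhat q (p'.1 ij) (p'.2 ij) + F ij (p'.1 ij))) ∧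
      (∑ ij, (bhat q (p.1 ij) (p.2 ij) + F ij (p.1 ij))) ≠ ⊤ ∧
      (∑ ij, (bhat q (p.1 ij) (p.2 ij) + F ij (p.1 ij))) ≠ ⊥ := by
  obtain ⟨p₀, hp₀, hm₀, hw₀⟩ :=
    exists_mem_feasibleSet hAsum hB.symm.subset hBconst hd hdsum.le
  have hfin : cost q F p₀ ≠ ⊤ := cost_ne_top hFfin hm₀ hw₀
  obtain ⟨p, hp, hmin⟩ := exists_isMinOn_of_isCompact_sublevel hp₀
    ((lowerSemicontinuous_cost hq hFcont hFtop).lowerSemicontinuousOn _)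
    (isCompact_feasibleSet_inter_sublevel hq hFcont hFtop hFfin A B _ d hfin)
  exact ⟨p, hp, fun p' hp' => hmin hp', ne_top_of_le_ne_top hfin (hmin hp₀),
    cost_ne_bot (by linarith) hFtop hFfin p⟩

/-- the discrete problem `(P_h^d)`, i.e. minimizing
`𝓑(m,w) + 𝓕(m)` subject to `G(m,w) = (0,1)` and `m ≤ d`, admits at least one
minimizer, and the optimal cost is finite. -/
theorem stmt7 (N : ℕ) (hN : 0 < N) (q : ℝ) (hq : 1 < q)
    (A : ((Fin N × Fin N) → ℝ) →ₗ[ℝ] ((Fin N × Fin N) → ℝ))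
    (B : ((Fin N × Fin N) → (Fin 4 → ℝ)) →ₗ[ℝ] ((Fin N × Fin N) → ℝ))
    (hA1 : A (fun _ => 1) = 0)
    (hAsum : ∀ m, ∑ ij, A m ij = 0)
    (hB : (LinearMap.range B : Set ((Fin N × Fin N) → ℝ)) = {y | ∑ ij, y ij = 0})
    (hBconst : ∀ c : Fin 4 → ℝ, B (fun _ => c) = 0)
    (d : (Fin N × Fin N) → ℝ) (hd : ∀ ij, 0 < d ij)
    (hdsum : 1 < (1 / (N : ℝ)) ^ 2 * ∑ ij, d ij)
    (F : (Fin N × Fin N) → ℝ → EReal)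
    (hFcont : ∀ ij, ContinuousOn (F ij) (Set.Ici 0))
    (hFtop : ∀ ij (m : ℝ), m < 0 → F ij m = ⊤)
    (hFfin : ∀ ij (m : ℝ), 0 ≤ m → ∃ r : ℝ, F ij m = (r : EReal)) :
    ∃ p : ((Fin N × Fin N) → ℝ) × ((Fin N × Fin N) → (Fin 4 → ℝ)),
      (A p.1 + B p.2 = 0 ∧ (1 / (N : ℝ)) ^ 2 * ∑ ij, p.1 ij = 1 ∧ ∀ ij, p.1 ij ≤ d ij) ∧
      (∀ p' : ((Fin N × Fin N) → ℝ) × ((Fin N × Fin N) → (Fin 4 → ℝ)),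
        (A p'.1 + B p'.2 = 0 ∧ (1 / (N : ℝ)) ^ 2 * ∑ ij, p'.1 ij = 1 ∧ ∀ ij, p'.1 ij ≤ d ij) →
        (∑ ij, (bhat q (p.1 ij) (p.2 ij) + F ij (p.1 ij)))
          ≤ ∑ ij, (bhat q (p'.1 ij) (p'.2 ij) + F ij (p'.1 ij))) ∧
      (∑ ij, (bhat q (p.1 ij) (p.2 ij) + F ij (p.1 ij))) ≠ ⊤ ∧
      (∑ ij, (bhat q (p.1 ij) (p.2 ij) + F ij (p.1 ij))) ≠ ⊥ :=
  stmt7_general N q hq A B hAsum hB hBconst d hd hdsum F hFcont hFtop hFfin
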